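/- Define the regularization map reg : ℚ⟨B⟩ → ℚ⟨B⟩⁰ as the composition of the inverse of reg_T with evaluation at T = 0. Then reg is a ℚ-algebra morphism for the balanced quasi-shuffle product, i.e. reg(u ∗_b v) = reg(u) ∗_b reg(v) for all u, v ∈ ℚ⟨B⟩ and reg(𝟏) = 𝟏; moreover reg restricts to the identity on ℚ⟨B⟩⁰ and reg(b₀) = 0. -/

import Mathlib

/-!
STATEMENT 6: the regularization `reg : ℚ⟨B⟩ → ℚ⟨B⟩⁰`, defined as the composition of
the inverse of `reg_T` with evaluation at `T = 0`, is an algebra morphism for the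
balanced quasi-shuffle product `∗_b`, restricts to the identity on `ℚ⟨B⟩⁰`, and
kills `b₀`.

`ℚ⟨B⟩` is realized as the space of finite `ℚ`-linear combinations of words
(lists of `ℕ`, the letter `i` standing for `b_i`); `ℚ⟨B⟩⁰[T]` is realized as the
subtype of finitely supported maps `ℕ →₀ ℚ⟨B⟩` (coefficients of `T^n`) with all
values in `ℚ⟨B⟩⁰`.
-/

open Finsupp

/-- `ℚ⟨B⟩`. -/
abbrev QB : Type := List ℕ →₀ ℚ

/-- The word `b_{s₁} ⋯ b_{s_l}`; `wB []` is the empty word `𝟏`. -/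
noncomputable def wB (w : List ℕ) : QB := Finsupp.single w 1

/-- Left concatenation by the letter `b_a`, extended `ℚ`-linearly. -/
noncomputable def consB (a : ℕ) (x : QB) : QB := Finsupp.mapDomain (List.cons a) x

/-- The balanced quasi-shuffle product `∗_b` on words. -/
noncomputable def bshW : List ℕ → List ℕ → QB
  | [], w => wB w
  | i :: u, [] => wB (i :: u)
  | i :: u, j :: v =>
      consB i (bshW u (j :: v)) + consB j (bshW (i :: u) v) +
        (if 1 ≤ i ∧ 1 ≤ j then consB (i + j) (bshW u v) else 0)
  termination_by u v => u.length + v.length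

/-- The balanced quasi-shuffle product `∗_b` on `ℚ⟨B⟩` (ℚ-bilinear extension). -/
noncomputable def bsh (x y : QB) : QB :=
  x.sum fun u a => y.sum fun v b => (a * b) • bshW u v

/-- `ℚ⟨B⟩⁰`: the subspace of `ℚ⟨B⟩` spanned by `𝟏` and the words not starting in `b₀`. -/
noncomputable def QB0 : Submodule ℚ QB :=
  Submodule.span ℚ {x | ∃ w : List ℕ, w.head? ≠ some 0 ∧ x = wB w}

/-- The `n`-fold `∗_b`-power `b₀^{∗_b n}` of the letter `b₀`. -/
noncomputable def bpow : ℕ → QB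
  | 0 => wB []
  | n + 1 => bsh (bpow n) (wB [0])

/-- The regularization map `reg_T : ℚ⟨B⟩⁰[T] → ℚ⟨B⟩`, `w T^n ↦ w ∗_b b₀^{∗_b n}`. -/
noncomputable def regT (P : ℕ →₀ QB) : QB := P.sum fun n x => bsh x (bpow n)

instance : Nonempty {P : ℕ →₀ QB // ∀ n, P n ∈ QB0} :=
  ⟨⟨0, fun n => by simp [Submodule.zero_mem]⟩⟩

/-- The regularization `reg : ℚ⟨B⟩ → ℚ⟨B⟩⁰ ⊆ ℚ⟨B⟩`: apply the inverse of `reg_T` and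
then evaluate at `T = 0` (i.e. take the constant coefficient). -/
noncomputable def reg (x : QB) : QB :=
  ((Function.invFun (fun P : {P : ℕ →₀ QB // ∀ n, P n ∈ QB0} => regT P.1) x).1) 0


-- ===== Section 1: basic lemmas =====

lemma cons_injective (a : ℕ) : Function.Injective (List.cons a) :=
  fun _ _ h => (List.cons.injEq _ _ _ _ ▸ h).2

lemma consB_zero (a : ℕ) : consB a 0 = 0 := Finsupp.mapDomain_zero

lemma consB_add (a : ℕ) (x y : QB) : consB a (x + y) = consB a x + consB a y :=
  Finsupp.mapDomain_add

lemma consB_smul (a : ℕ) (q : ℚ) (x : QB) : consB a (q • x) = q • consB a x :=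
  Finsupp.mapDomain_smul _ _

lemma consB_wB (a : ℕ) (w : List ℕ) : consB a (wB w) = wB (a :: w) := by
  simp [consB, wB, Finsupp.mapDomain_single]

lemma consB_apply_cons (a : ℕ) (x : QB) (t : List ℕ) :
    (consB a x) (a :: t) = x t :=
  Finsupp.mapDomain_apply (cons_injective a) x t

lemma consB_apply_ne (a b : ℕ) (h : a ≠ b) (x : QB) (t : List ℕ) :
    (consB a x) (b :: t) = 0 := by
  apply Finsupp.mapDomain_notin_range
  rintro ⟨s, hs⟩
  exact h (List.cons.injEq _ _ _ _ ▸ hs).1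

lemma consB_apply_nil (a : ℕ) (x : QB) : (consB a x) [] = 0 := by
  apply Finsupp.mapDomain_notin_range
  rintro ⟨s, hs⟩
  exact List.cons_ne_nil _ _ hs

lemma support_consB (a : ℕ) (x : QB) (w : List ℕ) (hw : w ∈ (consB a x).support) :
    ∃ t ∈ x.support, w = a :: t := by
  have := Finsupp.mapDomain_support hw
  rcases Finset.mem_image.mp this with ⟨t, ht, rfl⟩
  exact ⟨t, ht, rfl⟩

-- ===== bilinearity of bsh =====

lemma bsh_zero_left (y : QB) : bsh 0 y = 0 := by simp [bsh]

lemma bsh_zero_right (x : QB) : bsh x 0 = 0 := by simp [bsh]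

lemma bsh_add_left (x x' y : QB) : bsh (x + x') y = bsh x y + bsh x' y := by
  unfold bsh
  rw [Finsupp.sum_add_index]
  · intro u _; simp
  · intro u _ a a'
    rw [← Finsupp.sum_add]
    congr 1; funext v b
    rw [add_mul, add_smul]

lemma bsh_add_right (x y y' : QB) : bsh x (y + y') = bsh x y + bsh x y' := by
  unfold bsh
  rw [← Finsupp.sum_add]
  congr 1; funext u a
  rw [Finsupp.sum_add_index]
  · intro v _; simp
  · intro v _ b b'
    rw [mul_add, add_smul]

lemma bsh_smul_left (q : ℚ) (x y : QB) : bsh (q • x) y = q • bsh x y := by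
  unfold bsh
  rw [Finsupp.sum_smul_index, Finsupp.smul_sum]
  · congr 1; funext u a
    rw [Finsupp.smul_sum]
    congr 1; funext v b
    rw [smul_smul, mul_assoc]
  · intro u; simp

lemma bsh_smul_right (q : ℚ) (x y : QB) : bsh x (q • y) = q • bsh x y := by
  unfold bsh
  rw [Finsupp.smul_sum]
  congr 1; funext u a
  rw [Finsupp.sum_smul_index, Finsupp.smul_sum]
  · congr 1; funext v b
    rw [smul_smul]; ring_nf
  · intro v; simp

lemma bsh_wB_wB (u v : List ℕ) : bsh (wB u) (wB v) = bshW u v := by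
  unfold bsh wB
  rw [Finsupp.sum_single_index, Finsupp.sum_single_index] <;> simp

lemma bshW_nil_right (u : List ℕ) : bshW u [] = wB u := by
  cases u <;> rw [bshW]

lemma bshW_nil_left (u : List ℕ) : bshW [] u = wB u := by rw [bshW]

lemma bsh_wB_left (u : List ℕ) (y : QB) :
    bsh (wB u) y = y.sum fun v b => b • bshW u v := by
  unfold bsh wB
  rw [Finsupp.sum_single_index]
  · simp
  · simp

lemma bsh_one_right (x : QB) : bsh x (wB []) = x := by
  unfold bsh wB
  have : ∀ u a, (Finsupp.single ([] : List ℕ) (1:ℚ)).sum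
      (fun v b => (a * b) • bshW u v) = Finsupp.single u a := by
    intro u a
    rw [Finsupp.sum_single_index (by simp)]
    rw [mul_one, bshW_nil_right, wB, Finsupp.smul_single, smul_eq_mul, mul_one]
  simp only [this]
  exact Finsupp.sum_single x

lemma bsh_one_left (y : QB) : bsh (wB []) y = y := by
  rw [bsh_wB_left]
  have : ∀ v b, b • bshW [] v = Finsupp.single v b := by
    intro v b
    rw [bshW_nil_left, wB, Finsupp.smul_single, smul_eq_mul, mul_one]
  simp only [this]
  exact Finsupp.sum_single y

-- ===== Section 2: the master recursion for bsh =====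

lemma bshW_cons_cons (i j : ℕ) (u v : List ℕ) :
    bshW (i :: u) (j :: v) =
      consB i (bshW u (j :: v)) + consB j (bshW (i :: u) v) +
        (if 1 ≤ i ∧ 1 ≤ j then consB (i + j) (bshW u v) else 0) := by
  rw [bshW]

lemma single_eq_smul_wB (t : List ℕ) (q : ℚ) : Finsupp.single t q = q • wB t := by
  rw [wB, Finsupp.smul_single, smul_eq_mul, mul_one]

lemma bsh_cons_wB_wB (i j : ℕ) (w w' : List ℕ) :
    bsh (consB i (wB w)) (consB j (wB w')) =
      consB i (bsh (wB w) (consB j (wB w'))) + consB j (bsh (consB i (wB w)) (wB w')) +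
        (if 1 ≤ i ∧ 1 ≤ j then consB (i + j) (bsh (wB w) (wB w')) else 0) := by
  simp only [consB_wB, bsh_wB_wB]
  exact bshW_cons_cons i j w w'

lemma bsh_cons_cons (i j : ℕ) (x y : QB) :
    bsh (consB i x) (consB j y) =
      consB i (bsh x (consB j y)) + consB j (bsh (consB i x) y) +
        (if 1 ≤ i ∧ 1 ≤ j then consB (i + j) (bsh x y) else 0) := by
  induction x using Finsupp.induction_linear with
  | zero => simp [consB_zero, bsh_zero_left, bsh_zero_right]
  | add x x' hx hx' =>
      rw [consB_add, bsh_add_left, hx, hx']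
      simp only [consB_add, bsh_add_left]
      split_ifs with h <;> abel
  | single w q =>
      induction y using Finsupp.induction_linear with
      | zero => simp [consB_zero, bsh_zero_left, bsh_zero_right]
      | add y y' hy hy' =>
          rw [consB_add, bsh_add_right, hy, hy']
          simp only [consB_add, bsh_add_right]
          split_ifs with h <;> abel
      | single w' q' =>
          rw [single_eq_smul_wB, single_eq_smul_wB]
          simp only [consB_smul, bsh_smul_left, bsh_smul_right]
          rw [bsh_cons_wB_wB]
          split_ifs with h <;> simp only [smul_add, smul_zero, consB_smul, add_zero] <;> abel

-- ===== Section 3: commutativity and associativity =====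

lemma ite_bsh_left (c : Prop) [Decidable c] (x z : QB) :
    bsh (if c then x else 0) z = if c then bsh x z else 0 := by
  split_ifs <;> simp [bsh_zero_left]

lemma ite_bsh_right (c : Prop) [Decidable c] (x z : QB) :
    bsh z (if c then x else 0) = if c then bsh z x else 0 := by
  split_ifs <;> simp [bsh_zero_right]

lemma consB_ite (a : ℕ) (c : Prop) [Decidable c] (x : QB) :
    consB a (if c then x else 0) = if c then consB a x else 0 := by
  split_ifs <;> simp [consB_zero]

lemma ite_add3 (c : Prop) [Decidable c] (a b d : QB) :
    (if c then a + b + d else 0) = (if c then a else 0) + (if c then b else 0) +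
      (if c then d else 0) := by
  split_ifs <;> simp

lemma ite_merge_l (i j k : ℕ) (T : QB) :
    (if 1 ≤ i ∧ 1 ≤ j then (if 1 ≤ i + j ∧ 1 ≤ k then T else 0) else 0) =
      if 1 ≤ i ∧ 1 ≤ j ∧ 1 ≤ k then T else 0 := by
  split_ifs <;> first | rfl | omega

lemma ite_merge_r (i j k : ℕ) (T : QB) :
    (if 1 ≤ j ∧ 1 ≤ k then (if 1 ≤ i ∧ 1 ≤ j + k then T else 0) else 0) =
      if 1 ≤ i ∧ 1 ≤ j ∧ 1 ≤ k then T else 0 := by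
  split_ifs <;> first | rfl | omega

lemma bshW_comm_aux : ∀ n (u v : List ℕ), u.length + v.length ≤ n →
    bshW u v = bshW v u := by
  intro n
  induction n with
  | zero =>
      intro u v h
      cases u <;> cases v <;> simp_all
  | succ n ih =>
      intro u v h
      match u, v with
      | [], v => rw [bshW_nil_left, bshW_nil_right]
      | i :: u, [] => rw [bshW_nil_left, bshW_nil_right]
      | i :: u, j :: v =>
          rw [bshW_cons_cons, bshW_cons_cons]
          simp only [List.length_cons] at h
          rw [ih u (j :: v) (by simp only [List.length_cons]; omega),
            ih (i :: u) v (by simp only [List.length_cons]; omega),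
            ih u v (by omega)]
          split_ifs with h1 h2 h2 <;>
            first
              | tauto
              | (rw [Nat.add_comm j i]; abel)
              | abel

lemma bshW_comm (u v : List ℕ) : bshW u v = bshW v u := bshW_comm_aux _ u v le_rfl

lemma bsh_comm (x y : QB) : bsh x y = bsh y x := by
  induction x using Finsupp.induction_linear with
  | zero => simp [bsh_zero_left, bsh_zero_right]
  | add x x' hx hx' => rw [bsh_add_left, bsh_add_right, hx, hx']
  | single w q =>
      induction y using Finsupp.induction_linear with
      | zero => simp [bsh_zero_left, bsh_zero_right]
      | add y y' hy hy' => rw [bsh_add_left, bsh_add_right, hy, hy']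
      | single w' q' =>
          rw [single_eq_smul_wB, single_eq_smul_wB, bsh_smul_left, bsh_smul_right,
            bsh_smul_left, bsh_smul_right, bsh_wB_wB, bsh_wB_wB, bshW_comm,
            smul_comm q' q]

lemma bsh_triple_left (i j : ℕ) (x y z : QB) :
    bsh (bsh (consB i x) (consB j y)) z =
      bsh (consB i (bsh x (consB j y))) z + bsh (consB j (bsh (consB i x) y)) z +
        (if 1 ≤ i ∧ 1 ≤ j then bsh (consB (i + j) (bsh x y)) z else 0) := by
  rw [bsh_cons_cons, bsh_add_left, bsh_add_left, ite_bsh_left]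

lemma bsh_triple_right (j k : ℕ) (x y z : QB) :
    bsh x (bsh (consB j y) (consB k z)) =
      bsh x (consB j (bsh y (consB k z))) + bsh x (consB k (bsh (consB j y) z)) +
        (if 1 ≤ j ∧ 1 ≤ k then bsh x (consB (j + k) (bsh y z)) else 0) := by
  rw [bsh_cons_cons, bsh_add_right, bsh_add_right, ite_bsh_right]

lemma assoc_step (i j k : ℕ) (X Y Z : QB)
    (h1 : bsh (bsh X (consB j Y)) (consB k Z) = bsh X (bsh (consB j Y) (consB k Z)))
    (h2 : bsh (bsh (consB i X) Y) (consB k Z) = bsh (consB i X) (bsh Y (consB k Z)))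
    (h3 : bsh (bsh (consB i X) (consB j Y)) Z = bsh (consB i X) (bsh (consB j Y) Z))
    (h4 : bsh (bsh X Y) (consB k Z) = bsh X (bsh Y (consB k Z)))
    (h5 : bsh (bsh X (consB j Y)) Z = bsh X (bsh (consB j Y) Z))
    (h6 : bsh (bsh (consB i X) Y) Z = bsh (consB i X) (bsh Y Z))
    (h7 : bsh (bsh X Y) Z = bsh X (bsh Y Z)) :
    bsh (bsh (consB i X) (consB j Y)) (consB k Z) =
      bsh (consB i X) (bsh (consB j Y) (consB k Z)) := by
  have h3' : bsh (consB i X) (bsh (consB j Y) Z) =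
      bsh (consB i (bsh X (consB j Y))) Z + bsh (consB j (bsh (consB i X) Y)) Z +
        (if 1 ≤ i ∧ 1 ≤ j then bsh (consB (i + j) (bsh X Y)) Z else 0) := by
    rw [← h3]; exact bsh_triple_left i j X Y Z
  rw [bsh_triple_left i j, bsh_triple_right j k]
  simp only [bsh_cons_cons]
  rw [h2, h5, h6, h4, h7, h1]
  simp only [bsh_triple_right j k]
  rw [h3']
  simp only [consB_add, consB_ite, ite_add3, ite_merge_l, ite_merge_r, Nat.add_assoc]
  abel

lemma bshW_assoc_aux : ∀ n (u v w : List ℕ), u.length + v.length + w.length ≤ n →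
    bsh (bsh (wB u) (wB v)) (wB w) = bsh (wB u) (bsh (wB v) (wB w)) := by
  intro n
  induction n with
  | zero =>
      intro u v w h
      cases u <;> cases v <;> cases w <;> simp_all [bsh_one_left]
  | succ n ih =>
      intro u v w h
      match u, v, w with
      | [], v, w => rw [bsh_one_left, bsh_one_left]
      | u, [], w => rw [bsh_one_right, bsh_one_left]
      | u, v, [] => rw [bsh_one_right, bsh_one_right]
      | i :: u, j :: v, k :: w =>
          rw [← consB_wB i u, ← consB_wB j v, ← consB_wB k w]
          apply assoc_step <;> (try simp only [consB_wB]) <;>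
            exact ih _ _ _ (by
              simp only [List.length_cons] at h
              try simp only [List.length_cons]
              omega)

lemma bsh_assoc (x y z : QB) : bsh (bsh x y) z = bsh x (bsh y z) := by
  induction x using Finsupp.induction_linear with
  | zero => simp [bsh_zero_left]
  | add x x' hx hx' => rw [bsh_add_left, bsh_add_left, hx, hx', bsh_add_left]
  | single wu qu =>
    induction y using Finsupp.induction_linear with
    | zero => simp [bsh_zero_left, bsh_zero_right]
    | add y y' hy hy' => rw [bsh_add_right, bsh_add_left, hy, hy', bsh_add_left, bsh_add_right]
    | single wv qv =>
      induction z using Finsupp.induction_linear with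
      | zero => simp [bsh_zero_right]
      | add z z' hz hz' => rw [bsh_add_right, bsh_add_right, hz, hz', bsh_add_right]
      | single ww qw =>
          simp only [single_eq_smul_wB, bsh_smul_left, bsh_smul_right]
          rw [bshW_assoc_aux (wu.length + wv.length + ww.length) wu wv ww le_rfl]

-- ===== Section 4: leading zeros, QB0, bpow =====

def lzn : List ℕ → ℕ
  | 0 :: w => lzn w + 1
  | _ => 0

lemma lzn_nil : lzn [] = 0 := rfl

lemma lzn_zero_cons (w : List ℕ) : lzn (0 :: w) = lzn w + 1 := rfl

lemma lzn_cons_ne {a : ℕ} (h : a ≠ 0) (w : List ℕ) : lzn (a :: w) = 0 := by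
  cases a with
  | zero => exact absurd rfl h
  | succ a => rfl

lemma lzn_eq_zero_of_good {w : List ℕ} (h : w.head? ≠ some 0) : lzn w = 0 := by
  cases w with
  | nil => rfl
  | cons a t =>
      apply lzn_cons_ne
      intro ha; exact h (by simp [ha])

lemma good_of_lzn_eq_zero {w : List ℕ} (h : lzn w = 0) : w.head? ≠ some 0 := by
  cases w with
  | nil => simp
  | cons a t =>
      cases a with
      | zero => simp [lzn_zero_cons] at h
      | succ a => simp

lemma lzn_replicate_append {v : List ℕ} (hv : v.head? ≠ some 0) (n : ℕ) :
    lzn (List.replicate n 0 ++ v) = n := by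
  induction n with
  | zero => simpa using lzn_eq_zero_of_good hv
  | succ n ih => rw [List.replicate_succ, List.cons_append, lzn_zero_cons, ih]

lemma lzn_decomp : ∀ t : List ℕ,
    t = List.replicate (lzn t) 0 ++ t.drop (lzn t) ∧
      (t.drop (lzn t)).head? ≠ some 0 := by
  intro t
  induction t with
  | nil => simp [lzn_nil]
  | cons a t ih =>
      cases a with
      | zero =>
          rw [lzn_zero_cons]
          constructor
          · rw [List.replicate_succ, List.cons_append, List.drop_succ_cons]
            exact congrArg (0 :: ·) ih.1
          · rw [List.drop_succ_cons]; exact ih.2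
      | succ a =>
          rw [lzn_cons_ne (Nat.succ_ne_zero a)]
          simp

lemma wB_mem_QB0 {w : List ℕ} (hw : w.head? ≠ some 0) : wB w ∈ QB0 :=
  Submodule.subset_span ⟨w, hw, rfl⟩

lemma mem_QB0_iff (x : QB) :
    x ∈ QB0 ↔ ∀ w : List ℕ, w.head? = Option.some 0 → x w = 0 := by
  constructor
  · intro hx
    induction hx using Submodule.span_induction with
    | mem x hx =>
        rcases hx with ⟨w, hw, rfl⟩
        intro t ht
        rw [wB, Finsupp.single_apply]
        split_ifs with h
        · exact absurd (h ▸ ht) hw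
        · rfl
    | zero => intro t _; rfl
    | add x y _ _ hx hy => intro t ht; rw [Finsupp.add_apply, hx t ht, hy t ht, add_zero]
    | smul q x _ hx => intro t ht; rw [Finsupp.smul_apply, hx t ht, smul_zero]
  · intro hx
    rw [← Finsupp.sum_single x]
    apply Submodule.sum_mem
    intro w hw
    rw [single_eq_smul_wB]
    apply Submodule.smul_mem
    apply wB_mem_QB0
    intro h0
    exact Finsupp.mem_support_iff.mp hw (hx w h0)

lemma bshW_rep (n : ℕ) :
    bshW (List.replicate n 0) [0] = ((n : ℚ) + 1) • wB (List.replicate (n + 1) 0) := by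
  induction n with
  | zero =>
      rw [List.replicate_zero, bshW_nil_left]
      simp [List.replicate_succ]
  | succ n ih =>
      rw [List.replicate_succ, show ([0] : List ℕ) = 0 :: [] from rfl, bshW_cons_cons]
      rw [show (0 :: [] : List ℕ) = [0] from rfl, ih, bshW_nil_right]
      simp only [show ¬(1 ≤ 0 ∧ 1 ≤ 0) by omega, if_false, add_zero]
      rw [consB_smul, consB_wB, consB_wB]
      simp only [← List.replicate_succ]
      push_cast
      conv_rhs => rw [add_smul, one_smul]
  
lemma bpow_eq (n : ℕ) :
    bpow n = ((n.factorial : ℚ)) • wB (List.replicate n 0) := by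
  induction n with
  | zero => simp [bpow, List.replicate_zero]
  | succ n ih =>
      rw [bpow, ih, bsh_smul_left, bsh_wB_wB, bshW_rep, smul_smul]
      rw [Nat.factorial_succ]
      push_cast
      ring_nf

-- ===== Section 5: triangularity =====

lemma lzn_replicate (n : ℕ) : lzn (List.replicate n 0) = n := by
  have := lzn_replicate_append (v := []) (by simp) n
  simpa using this

lemma bshW_rep_supp : ∀ n m (u : List ℕ), m + u.length ≤ n →
    u.head? ≠ Option.some 0 →
    ∀ w ∈ (bshW u (List.replicate m 0)).support, lzn w ≤ m := by
  intro n
  induction n with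
  | zero =>
      intro m u h hu w hw
      have hm : m = 0 := by omega
      subst hm
      rw [List.replicate_zero, bshW_nil_right, wB] at hw
      have := Finsupp.support_single_subset hw
      simp only [Finset.mem_singleton] at this
      subst this
      rw [lzn_eq_zero_of_good hu]
  | succ n ih =>
      intro m u h hu w hw
      cases m with
      | zero =>
          rw [List.replicate_zero, bshW_nil_right, wB] at hw
          have := Finsupp.support_single_subset hw
          simp only [Finset.mem_singleton] at this
          subst this
          rw [lzn_eq_zero_of_good hu]
      | succ m =>
          cases u with
          | nil =>
              rw [bshW_nil_left, wB] at hw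
              have := Finsupp.support_single_subset hw
              simp only [Finset.mem_singleton] at this
              subst this
              rw [lzn_replicate]
          | cons i t =>
              have hi : i ≠ 0 := by intro h0; exact hu (by simp [h0])
              rw [List.replicate_succ, bshW_cons_cons] at hw
              rw [if_neg (by omega), add_zero] at hw
              rcases Finset.mem_union.mp (Finsupp.support_add hw) with hw | hw
              · rcases support_consB _ _ _ hw with ⟨s, _, rfl⟩
                rw [lzn_cons_ne hi]
                omega
              · rcases support_consB _ _ _ hw with ⟨s, hs, rfl⟩
                rw [lzn_zero_cons]
                have hle : lzn s ≤ m := by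
                  apply ih m (i :: t) (by simp at h ⊢; omega) hu s
                  exact hs
                omega

lemma bshW_rep_coeff : ∀ n m (u v : List ℕ), m + u.length ≤ n →
    u.head? ≠ Option.some 0 →
    (bshW u (List.replicate m 0)) (List.replicate m 0 ++ v) =
      if v = u then 1 else 0 := by
  intro n
  induction n with
  | zero =>
      intro m u v h hu
      have hm : m = 0 := by omega
      have hu0 : u = [] := by cases u <;> simp_all
      subst hm; subst hu0
      rw [List.replicate_zero, bshW_nil_right, wB, List.nil_append,
        Finsupp.single_apply]
      simp [eq_comm]
  | succ n ih =>
      intro m u v h hu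
      cases m with
      | zero =>
          rw [List.replicate_zero, bshW_nil_right, wB, List.nil_append,
            Finsupp.single_apply]
          simp [eq_comm]
      | succ m =>
          cases u with
          | nil =>
              rw [bshW_nil_left, wB, Finsupp.single_apply]
              have hiff : (List.replicate (m+1) 0 = List.replicate (m+1) 0 ++ v) ↔
                  (v = ([] : List ℕ)) := by
                constructor
                · intro hh
                  have hl := congrArg List.length hh
                  simp only [List.length_append] at hl
                  have hv : v.length = 0 := by omega
                  exact List.length_eq_zero_iff.mp hv
                · intro hh; rw [hh, List.append_nil]
              rw [if_congr hiff rfl rfl]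
          | cons i t =>
              have hi : i ≠ 0 := by intro h0; exact hu (by simp [h0])
              rw [List.replicate_succ, bshW_cons_cons, if_neg (by omega), add_zero]
              rw [List.cons_append, Finsupp.add_apply]
              rw [consB_apply_ne i 0 hi, consB_apply_cons, zero_add]
              exact ih m (i :: t) v (by simp at h ⊢; omega) hu

-- ===== Section 6: module-level triangularity, regT =====

lemma bsh_wB_right (x : QB) (z : List ℕ) :
    bsh x (wB z) = x.sum fun u a => a • bshW u z := by
  unfold bsh wB
  apply Finsupp.sum_congr
  intro u _
  rw [Finsupp.sum_single_index (by simp), mul_one]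

lemma bsh_rep_apply_low {x : QB} (hx : x ∈ QB0) (m : ℕ) {w : List ℕ}
    (hw : m < lzn w) : (bsh x (wB (List.replicate m 0))) w = 0 := by
  rw [bsh_wB_right, Finsupp.sum_apply, Finsupp.sum]
  apply Finset.sum_eq_zero
  intro u hu
  rw [Finsupp.smul_apply]
  have hgood : u.head? ≠ Option.some 0 := by
    intro h0
    exact Finsupp.mem_support_iff.mp hu ((mem_QB0_iff x).mp hx u h0)
  have : w ∉ (bshW u (List.replicate m 0)).support := by
    intro hmem
    have := bshW_rep_supp (m + u.length) m u le_rfl hgood w hmem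
    omega
  rw [Finsupp.notMem_support_iff.mp this, smul_zero]

lemma bsh_rep_apply_top {x : QB} (hx : x ∈ QB0) (m : ℕ) {v : List ℕ}
    (hv : v.head? ≠ Option.some 0) :
    (bsh x (wB (List.replicate m 0))) (List.replicate m 0 ++ v) = x v := by
  rw [bsh_wB_right, Finsupp.sum_apply]
  have heach : ∀ u (a : ℚ), u ∈ x.support →
      (a • bshW u (List.replicate m 0)) (List.replicate m 0 ++ v) =
        if v = u then a else 0 := by
    intro u a hu
    have hgood : u.head? ≠ Option.some 0 := by
      intro h0
      exact Finsupp.mem_support_iff.mp hu ((mem_QB0_iff x).mp hx u h0)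
    rw [Finsupp.smul_apply, bshW_rep_coeff (m + u.length) m u v le_rfl hgood]
    split_ifs <;> simp
  rw [Finsupp.sum]
  rw [Finset.sum_congr rfl (fun u hu => heach u (x u) hu)]
  rw [Finset.sum_ite_eq]
  split_ifs with h
  · rfl
  · exact (Finsupp.notMem_support_iff.mp h).symm

lemma bpow_apply_low {x : QB} (hx : x ∈ QB0) (m : ℕ) {w : List ℕ}
    (hw : m < lzn w) : (bsh x (bpow m)) w = 0 := by
  rw [bpow_eq, bsh_smul_right, Finsupp.smul_apply, bsh_rep_apply_low hx m hw,
    smul_zero]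

lemma bpow_apply_top {x : QB} (hx : x ∈ QB0) (m : ℕ) {v : List ℕ}
    (hv : v.head? ≠ Option.some 0) :
    (bsh x (bpow m)) (List.replicate m 0 ++ v) = (m.factorial : ℚ) * x v := by
  rw [bpow_eq, bsh_smul_right, Finsupp.smul_apply, bsh_rep_apply_top hx m hv,
    smul_eq_mul]

lemma regT_single (n : ℕ) (x : QB) : regT (Finsupp.single n x) = bsh x (bpow n) :=
  Finsupp.sum_single_index (bsh_zero_left _)

lemma regT_zero : regT 0 = 0 := by simp [regT]

lemma regT_add (P Q : ℕ →₀ QB) : regT (P + Q) = regT P + regT Q := by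
  unfold regT
  rw [Finsupp.sum_add_index' (fun n => bsh_zero_left (bpow n))
    (fun n x y => bsh_add_left x y (bpow n))]

lemma regT_smul (q : ℚ) (P : ℕ →₀ QB) : regT (q • P) = q • regT P := by
  unfold regT
  rw [Finsupp.sum_smul_index' (fun n => bsh_zero_left (bpow n)), Finsupp.smul_sum]
  apply Finsupp.sum_congr
  intro n _
  rw [bsh_smul_left]

lemma regT_sub (P Q : ℕ →₀ QB) : regT (P - Q) = regT P - regT Q := by
  have h := regT_add (P - Q) Q
  rw [sub_add_cancel] at h
  rw [h]; abel

lemma regT_ker {P : ℕ →₀ QB} (hP : ∀ n, P n ∈ QB0) (h : regT P = 0) : P = 0 := by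
  by_contra hne
  have hsupp : P.support.Nonempty := Finsupp.support_nonempty_iff.mpr hne
  set n := P.support.max' hsupp with hn
  have hmem : n ∈ P.support := P.support.max'_mem hsupp
  have key : ∀ v : List ℕ, v.head? ≠ Option.some 0 →
      (regT P) (List.replicate n 0 ++ v) = (n.factorial : ℚ) * (P n) v := by
    intro v hv
    unfold regT
    rw [Finsupp.sum_apply]
    rw [Finsupp.sum]
    rw [Finset.sum_eq_single n]
    · exact bpow_apply_top (hP n) n hv
    · intro m hm hmn
      apply bpow_apply_low (hP m) m
      rw [lzn_replicate_append hv]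
      exact lt_of_le_of_ne (P.support.le_max' m hm) hmn
    · intro hn'; exact absurd hmem hn'
  have hPn : P n = 0 := by
    ext v
    by_cases hv : v.head? = Option.some 0
    · rw [(mem_QB0_iff (P n)).mp (hP n) v hv]; rfl
    · have := key v hv
      rw [h] at this
      simp only [Finsupp.coe_zero, Pi.zero_apply] at this
      have hfac : (n.factorial : ℚ) ≠ 0 := by
        exact_mod_cast Nat.factorial_ne_zero n
      have := (mul_eq_zero.mp this.symm).resolve_left hfac
      rw [this]; rfl
  exact Finsupp.mem_support_iff.mp hmem hPn

-- ===== Section 7: surjectivity =====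

lemma repr_smul (z : QB) : z = z.sum fun t a => a • wB t := by
  conv_lhs => rw [← Finsupp.sum_single z]
  exact Finsupp.sum_congr fun t _ => single_eq_smul_wB t _

noncomputable def Rng : Submodule ℚ QB where
  carrier := {x | ∃ P : ℕ →₀ QB, (∀ n, P n ∈ QB0) ∧ regT P = x}
  add_mem' := by
    rintro x y ⟨P, hP, rfl⟩ ⟨Q, hQ, rfl⟩
    exact ⟨P + Q, fun n => by rw [Finsupp.add_apply]; exact add_mem (hP n) (hQ n),
      regT_add P Q⟩
  zero_mem' := ⟨0, fun n => by simp, regT_zero⟩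
  smul_mem' := by
    rintro q x ⟨P, hP, rfl⟩
    exact ⟨q • P, fun n => by rw [Finsupp.smul_apply]; exact Submodule.smul_mem _ q (hP n),
      regT_smul q P⟩

lemma QB0_le_Rng {x : QB} (hx : x ∈ QB0) : x ∈ Rng := by
  refine ⟨Finsupp.single 0 x, ?_, ?_⟩
  · intro n
    rw [Finsupp.single_apply]
    split_ifs
    · exact hx
    · exact zero_mem _
  · rw [regT_single]
    show bsh x (wB []) = x
    exact bsh_one_right x

lemma wB_mem_Rng : ∀ N (w : List ℕ), lzn w ≤ N → wB w ∈ Rng := by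
  intro N
  induction N with
  | zero =>
      intro w hw
      exact QB0_le_Rng (wB_mem_QB0 (good_of_lzn_eq_zero (Nat.le_zero.mp hw)))
  | succ N ih =>
      intro w hw
      by_cases h0 : lzn w = 0
      · exact QB0_le_Rng (wB_mem_QB0 (good_of_lzn_eq_zero h0))
      set n := lzn w with hn
      set u := w.drop n with hu
      have hdec := lzn_decomp w
      have hgood : u.head? ≠ Option.some 0 := hdec.2
      have hwu : w = List.replicate n 0 ++ u := hdec.1
      set y := bsh ((n.factorial : ℚ)⁻¹ • wB u) (bpow n) with hy
      have hyR : y ∈ Rng := by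
        refine ⟨Finsupp.single n ((n.factorial : ℚ)⁻¹ • wB u), ?_, regT_single _ _⟩
        intro m
        rw [Finsupp.single_apply]
        split_ifs
        · exact Submodule.smul_mem _ _ (wB_mem_QB0 hgood)
        · exact zero_mem _
      have hymem : (n.factorial : ℚ)⁻¹ • wB u ∈ QB0 :=
        Submodule.smul_mem _ _ (wB_mem_QB0 hgood)
      have hfac : (n.factorial : ℚ) ≠ 0 := by exact_mod_cast Nat.factorial_ne_zero n
      have he : ∀ t : List ℕ, n ≤ lzn t → (y - wB w) t = 0 := by
        intro t ht
        rw [Finsupp.sub_apply]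
        rcases Nat.lt_or_ge n (lzn t) with hlt | hge
        · rw [bpow_apply_low hymem n hlt]
          have : w ≠ t := by intro h; rw [h] at hn; omega
          rw [wB, Finsupp.single_apply, if_neg this, sub_zero]
        · have hteq : lzn t = n := by omega
          have hdect := lzn_decomp t
          set v := t.drop (lzn t) with hv
          have hgv : v.head? ≠ Option.some 0 := hdect.2
          have htv : t = List.replicate n 0 ++ v := by rw [← hteq]; exact hdect.1
          rw [htv, bpow_apply_top hymem n hgv, hwu, Finsupp.smul_apply, smul_eq_mul]
          simp only [wB, Finsupp.single_apply]
          have hcond : (List.replicate n 0 ++ u = List.replicate n 0 ++ v) ↔ (u = v) :=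
            ⟨List.append_cancel_left, fun h => by rw [h]⟩
          rw [if_congr hcond rfl rfl]
          split_ifs with h
          · field_simp; norm_num
          · simp
      have heR : y - wB w ∈ Rng := by
        rw [repr_smul (y - wB w)]
        apply Submodule.sum_mem
        intro t htm
        apply Submodule.smul_mem
        apply ih
        have hlt : lzn t < n := by
          by_contra hc
          exact Finsupp.mem_support_iff.mp htm (he t (by omega))
        omega
      have : wB w = y - (y - wB w) := by abel
      rw [this]
      exact sub_mem hyR heR

lemma regT_surj (x : QB) : ∃ P : ℕ →₀ QB, (∀ n, P n ∈ QB0) ∧ regT P = x := by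
  have : x ∈ Rng := by
    rw [repr_smul x]
    apply Submodule.sum_mem
    intro w _
    exact Submodule.smul_mem _ _ (wB_mem_Rng (lzn w) w le_rfl)
  exact this

-- ===== Section 8: closure, bpow_add, main theorem =====

lemma bshW_support_good {u v : List ℕ} (hu : u.head? ≠ Option.some 0)
    (hv : v.head? ≠ Option.some 0) {w : List ℕ} (hw : w ∈ (bshW u v).support) :
    w.head? ≠ Option.some 0 := by
  cases u with
  | nil =>
      rw [bshW_nil_left, wB] at hw
      have := Finsupp.support_single_subset hw
      simp only [Finset.mem_singleton] at this
      subst this; exact hv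
  | cons i u =>
      cases v with
      | nil =>
          rw [bshW_nil_right, wB] at hw
          have := Finsupp.support_single_subset hw
          simp only [Finset.mem_singleton] at this
          subst this; exact hu
      | cons j v =>
          have hi : i ≠ 0 := fun h => hu (by simp [h])
          have hj : j ≠ 0 := fun h => hv (by simp [h])
          rw [bshW_cons_cons] at hw
          rcases Finset.mem_union.mp (Finsupp.support_add hw) with hw' | hw'
          · rcases Finset.mem_union.mp (Finsupp.support_add hw') with hw'' | hw''
            · rcases support_consB _ _ _ hw'' with ⟨s, _, rfl⟩
              simp [hi]
            · rcases support_consB _ _ _ hw'' with ⟨s, _, rfl⟩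
              simp [hj]
          · by_cases hc : 1 ≤ i ∧ 1 ≤ j
            · rw [if_pos hc] at hw'
              rcases support_consB _ _ _ hw' with ⟨s, _, rfl⟩
              simp only [List.head?_cons, ne_eq, Option.some.injEq]
              omega
            · rw [if_neg hc] at hw'
              simp at hw'

lemma bsh_mem_QB0 {x y : QB} (hx : x ∈ QB0) (hy : y ∈ QB0) : bsh x y ∈ QB0 := by
  rw [mem_QB0_iff]
  intro w hw
  unfold bsh
  rw [Finsupp.sum_apply]
  rw [Finsupp.sum]
  apply Finset.sum_eq_zero
  intro u hu
  rw [Finsupp.sum_apply, Finsupp.sum]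
  apply Finset.sum_eq_zero
  intro v hv
  rw [Finsupp.smul_apply]
  have hgu : u.head? ≠ Option.some 0 :=
    fun h0 => Finsupp.mem_support_iff.mp hu ((mem_QB0_iff x).mp hx u h0)
  have hgv : v.head? ≠ Option.some 0 :=
    fun h0 => Finsupp.mem_support_iff.mp hv ((mem_QB0_iff y).mp hy v h0)
  have : w ∉ (bshW u v).support := fun hmem => bshW_support_good hgu hgv hmem hw
  rw [Finsupp.notMem_support_iff.mp this, smul_zero]

lemma bpow_add (k l : ℕ) : bpow (k + l) = bsh (bpow k) (bpow l) := by
  induction l with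
  | zero => rw [Nat.add_zero]; exact (bsh_one_right _).symm
  | succ l ih =>
      rw [show k + (l + 1) = (k + l) + 1 from rfl, bpow, ih, bsh_assoc, ← bpow]

lemma bsh_mul_mul (a b c d : QB) : bsh (bsh a b) (bsh c d) = bsh (bsh a c) (bsh b d) := by
  rw [bsh_assoc, bsh_assoc]
  congr 1
  rw [← bsh_assoc, ← bsh_assoc, bsh_comm b c]

lemma bsh_sum_left {F : ℕ →₀ QB} (g : ℕ → QB → QB) (y : QB) :
    bsh (F.sum g) y = F.sum fun k x => bsh (g k x) y := by
  rw [Finsupp.sum, Finsupp.sum]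
  exact map_sum (AddMonoidHom.mk' (fun x => bsh x y) (fun a b => bsh_add_left a b y)) _ _

lemma bsh_sum_right {F : ℕ →₀ QB} (g : ℕ → QB → QB) (x : QB) :
    bsh x (F.sum g) = F.sum fun k z => bsh x (g k z) := by
  rw [Finsupp.sum, Finsupp.sum]
  exact map_sum (AddMonoidHom.mk' (fun z => bsh x z) (fun a b => bsh_add_right x a b)) _ _

lemma regT_sum {F : ℕ →₀ QB} {g : ℕ → QB → (ℕ →₀ QB)} :
    regT (F.sum g) = F.sum fun k x => regT (g k x) :=
  Finsupp.sum_sum_index (fun n => bsh_zero_left (bpow n))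
    (fun n a b => bsh_add_left a b (bpow n))

/-- `reg` is an algebra morphism for `∗_b`, it restricts to the
identity on `ℚ⟨B⟩⁰`, and `reg b₀ = 0`. -/
theorem reg_algebra_morphism :
    (∀ u v : QB, reg (bsh u v) = bsh (reg u) (reg v)) ∧
    reg (wB []) = wB [] ∧
    (∀ x ∈ QB0, reg x = x) ∧
    reg (wB [0]) = 0 := by
  set f := fun P : {P : ℕ →₀ QB // ∀ n, P n ∈ QB0} => regT P.1 with hf
  have hinj : Function.Injective f := by
    intro P Q h
    apply Subtype.ext
    have h' : regT P.1 = regT Q.1 := h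
    have hsub : regT (P.1 - Q.1) = 0 := by rw [regT_sub, h', sub_self]
    have hz : P.1 - Q.1 = 0 := regT_ker (fun n => by
      rw [Finsupp.sub_apply]; exact sub_mem (P.2 n) (Q.2 n)) hsub
    exact sub_eq_zero.mp hz
  have hsurj : Function.Surjective f := by
    intro x
    rcases regT_surj x with ⟨P, hP, hPx⟩
    exact ⟨⟨P, hP⟩, hPx⟩
  have hfix : ∀ P : {P : ℕ →₀ QB // ∀ n, P n ∈ QB0}, reg (f P) = P.1 0 := by
    intro P
    unfold reg
    rw [← hf, Function.leftInverse_invFun hinj P]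
  have hfe : ∀ x, f (Function.invFun f x) = x := fun x =>
    Function.rightInverse_invFun hsurj x
  have hone : wB [] ∈ QB0 := wB_mem_QB0 (by simp)
  have hsingle_mem : ∀ (n : ℕ) (x : QB), x ∈ QB0 → ∀ m, (Finsupp.single n x) m ∈ QB0 := by
    intro n x hx m
    rw [Finsupp.single_apply]
    split_ifs
    · exact hx
    · exact zero_mem _
  refine ⟨?_, ?_, ?_, ?_⟩
  · -- multiplicativity
    intro u v
    set P := Function.invFun f u with hP
    set Q := Function.invFun f v with hQ
    have hPu : regT P.1 = u := hfe u
    have hQv : regT Q.1 = v := hfe v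
    set R : ℕ →₀ QB := P.1.sum fun k x => Q.1.sum fun l y =>
      Finsupp.single (k + l) (bsh x y) with hR
    have hRmem : ∀ n, R n ∈ QB0 := by
      intro n
      rw [hR, Finsupp.sum_apply]
      apply Submodule.sum_mem
      intro k _
      show (Q.1.sum fun l y => Finsupp.single (k + l) (bsh (P.1 k) y)) n ∈ QB0
      rw [Finsupp.sum_apply]
      apply Submodule.sum_mem
      intro l _
      show (Finsupp.single (k + l) (bsh (P.1 k) (Q.1 l))) n ∈ QB0
      exact hsingle_mem _ _ (bsh_mem_QB0 (P.2 k) (Q.2 l)) n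
    have hfR : f ⟨R, hRmem⟩ = bsh u v := by
      show regT R = bsh u v
      rw [hR, regT_sum]
      have step1 : ∀ k (x : QB),
          regT (Q.1.sum fun l y => Finsupp.single (k + l) (bsh x y)) =
            bsh (bsh x (bpow k)) v := by
        intro k x
        rw [regT_sum]
        calc (Q.1.sum fun l y => regT (Finsupp.single (k + l) (bsh x y)))
            = Q.1.sum fun l y => bsh (bsh x (bpow k)) (bsh y (bpow l)) :=
              Finsupp.sum_congr fun l _ => by rw [regT_single, bpow_add, bsh_mul_mul]
          _ = bsh (bsh x (bpow k)) (Q.1.sum fun l y => bsh y (bpow l)) :=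
              (bsh_sum_right _ _).symm
          _ = bsh (bsh x (bpow k)) v := by
              rw [show (Q.1.sum fun l y => bsh y (bpow l)) = regT Q.1 from rfl, hQv]
      calc (P.1.sum fun k x => regT (Q.1.sum fun l y => Finsupp.single (k + l) (bsh x y)))
          = P.1.sum fun k x => bsh (bsh x (bpow k)) v :=
            Finsupp.sum_congr fun k _ => step1 k (P.1 k)
        _ = bsh (P.1.sum fun k x => bsh x (bpow k)) v := (bsh_sum_left _ _).symm
        _ = bsh u v := by
            rw [show (P.1.sum fun k x => bsh x (bpow k)) = regT P.1 from rfl, hPu]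
    have hR0 : R 0 = bsh (P.1 0) (Q.1 0) := by
      have inner : ∀ k (x : QB),
          (Q.1.sum fun l y => Finsupp.single (k + l) (bsh x y)) 0 =
            if (0 : ℕ) = k then bsh x (Q.1 0) else 0 := by
        intro k x
        rw [Finsupp.sum_apply]
        show (Q.1.sum fun l y => (Finsupp.single (k + l) (bsh x y)) 0) = _
        by_cases hk : k = 0
        · subst hk
          rw [if_pos rfl]
          calc (Q.1.sum fun l y => (Finsupp.single (0 + l) (bsh x y)) 0)
              = Q.1.sum fun l y => if (0 : ℕ) = l then bsh x y else 0 :=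
                Finsupp.sum_congr fun l _ => by
                  rw [Finsupp.single_apply]
                  split_ifs with h1 h2 h2 <;> first | rfl | omega
            _ = if 0 ∈ Q.1.support then bsh x (Q.1 0) else 0 := Finsupp.sum_ite_eq _ _ _
            _ = bsh x (Q.1 0) := by
                split_ifs with h
                · rfl
                · rw [Finsupp.notMem_support_iff.mp h, bsh_zero_right]
        · rw [if_neg fun h => hk h.symm, Finsupp.sum]
          apply Finset.sum_eq_zero
          intro l _
          rw [Finsupp.single_apply, if_neg (by omega)]
      rw [hR, Finsupp.sum_apply]
      show (P.1.sum fun k x => (Q.1.sum fun l y => Finsupp.single (k + l) (bsh x y)) 0) = _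
      calc (P.1.sum fun k x => (Q.1.sum fun l y => Finsupp.single (k + l) (bsh x y)) 0)
          = P.1.sum fun k x => if (0 : ℕ) = k then bsh x (Q.1 0) else 0 :=
            Finsupp.sum_congr fun k _ => inner k (P.1 k)
        _ = if 0 ∈ P.1.support then bsh (P.1 0) (Q.1 0) else 0 := Finsupp.sum_ite_eq _ _ _
        _ = bsh (P.1 0) (Q.1 0) := by
            split_ifs with h
            · rfl
            · rw [Finsupp.notMem_support_iff.mp h, bsh_zero_left]
    have hrr : reg (bsh u v) = R 0 := by
      rw [← hfR]
      exact hfix ⟨R, hRmem⟩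
    rw [hrr, hR0]
    rfl
  · -- reg 1 = 1
    have h1 : f ⟨Finsupp.single 0 (wB []), hsingle_mem 0 (wB []) hone⟩ = wB [] := by
      show regT (Finsupp.single 0 (wB [])) = wB []
      rw [regT_single]
      show bsh (wB []) (wB []) = wB []
      rw [bsh_one_left]
    have h2 := hfix ⟨Finsupp.single 0 (wB []), hsingle_mem 0 (wB []) hone⟩
    rw [h1] at h2
    rw [h2]
    show (Finsupp.single 0 (wB [])) 0 = wB []
    rw [Finsupp.single_apply, if_pos rfl]
  · -- identity on QB0
    intro x hx
    have h1 : f ⟨Finsupp.single 0 x, hsingle_mem 0 x hx⟩ = x := by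
      show regT (Finsupp.single 0 x) = x
      rw [regT_single]
      exact bsh_one_right x
    have h2 := hfix ⟨Finsupp.single 0 x, hsingle_mem 0 x hx⟩
    rw [h1] at h2
    rw [h2]
    show (Finsupp.single 0 x) 0 = x
    rw [Finsupp.single_apply, if_pos rfl]
  · -- reg b₀ = 0
    have h1 : f ⟨Finsupp.single 1 (wB []), hsingle_mem 1 (wB []) hone⟩ = wB [0] := by
      show regT (Finsupp.single 1 (wB [])) = wB [0]
      have hb1 : bpow 1 = bsh (wB []) (wB [0]) := by
        show bpow (0 + 1) = _
        rw [bpow, show bpow 0 = wB [] from by rw [bpow]]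
      rw [regT_single, hb1, bsh_one_left, bsh_one_left]
    have h2 := hfix ⟨Finsupp.single 1 (wB []), hsingle_mem 1 (wB []) hone⟩
    rw [h1] at h2
    rw [h2]
    show (Finsupp.single 1 (wB [])) 0 = 0
    rw [Finsupp.single_apply, if_neg (by omega)]
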